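/- arXiv:2507.21894 — 5 statements merged into one kernel-verified Lean document; each statement's English description precedes it below -/
import Mathlib

section
/- Let ε, η > 0 and set δ = ε·η/2. Let T be a bounded normal operator on a complex Hilbert space H, let λ ∈ σ(T), and let x ∈ H be a unit vector with ‖Tx − λx‖ < δ. Then there exists a closed subspace V of H which is invariant under both T and T*, such that the spectrum of the restriction of T to V (as a bounded operator on the Hilbert space V) is contained in the closed ball of radius η centered at λ, and there exists y ∈ V with ‖x − y‖ < ε. -/
/-!
Take a bump `f` equal to `1` on the ball of radius `η / 2` about `μ` and supported in the closed
ball of radius `η`, and let `V` be the closure of the range of `f(T)`. It reduces `T` because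
`f(T)` commutes with `T` and `T*`. For `z` outside `tsupport f` choose `ψ` equal to `1` on
`tsupport f` and vanishing near `z`; then `(ψ(w) / (w - z))(T)` inverts `T - z` on `V`.
Finally `1 - f(w) = g(w) (w - μ)` with `‖g‖ ≤ 2 / η`, so `y = f(T) x` satisfies
`‖x - y‖ ≤ (2 / η) ‖T x - μ x‖ < ε`.
-/

open Filter Topology Metric

/-- The restriction of a continuous linear map to an invariant submodule,
as a continuous linear map on the submodule. -/
def clmRestrict {H : Type*} [NormedAddCommGroup H] [InnerProductSpace ℂ H]
    (T : H →L[ℂ] H) (V : Submodule ℂ H) (hV : ∀ x ∈ V, T x ∈ V) : V →L[ℂ] V where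
  toLinearMap := T.toLinearMap.restrict hV
  cont := Continuous.subtype_mk (T.continuous.comp continuous_subtype_val) _

@[simp]
lemma clmRestrict_apply {H : Type*} [NormedAddCommGroup H] [InnerProductSpace ℂ H]
    (T : H →L[ℂ] H) (V : Submodule ℂ H) (hV : ∀ x ∈ V, T x ∈ V) (v : V) :
    (clmRestrict T V hV v : H) = T v :=
  rfl

section DivisionBySub

variable {g : ℂ → ℂ} {c : ℂ}

lemma continuous_mul_inv_sub_of_eventuallyEq_zero (hg : Continuous g) (hc : g =ᶠ[𝓝 c] 0) :
    Continuous fun w => g w * (w - c)⁻¹ := by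
  refine continuous_iff_continuousAt.mpr fun w => ?_
  rcases eq_or_ne w c with rfl | hw
  · refine (continuousAt_const (y := (0 : ℂ))).congr ?_
    filter_upwards [hc] with u hu
    simp [hu]
  · exact hg.continuousAt.mul ((continuous_sub_right c).continuousAt.inv₀ (sub_ne_zero.mpr hw))

lemma mul_inv_sub_mul_sub_of_eventuallyEq_zero (hc : g =ᶠ[𝓝 c] 0) (w : ℂ) :
    g w * (w - c)⁻¹ * (w - c) = g w := by
  rcases eq_or_ne w c with rfl | hw
  · simp [hc.self_of_nhds]
  · exact inv_mul_cancel_right₀ (sub_ne_zero.mpr hw) _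

end DivisionBySub

lemma ContDiffBump.norm_one_sub_mul_inv_sub_le {μ : ℂ} (φ : ContDiffBump μ) (w : ℂ) :
    ‖(1 - (φ w : ℂ)) * (w - μ)⁻¹‖ ≤ φ.rIn⁻¹ := by
  rcases le_or_gt (dist w μ) φ.rIn with hw | hw
  · simp [φ.one_of_mem_closedBall hw, φ.rIn_pos.le]
  have h1 : ‖1 - (φ w : ℂ)‖ ≤ 1 := by
    rw [← Complex.ofReal_one, ← Complex.ofReal_sub, Complex.norm_real, Real.norm_eq_abs,
      abs_le]
    constructor <;> linarith [φ.nonneg (x := w), φ.le_one (x := w)]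
  have h2 : ‖(w - μ)⁻¹‖ ≤ φ.rIn⁻¹ := by
    rw [norm_inv, ← dist_eq_norm]
    exact inv_anti₀ φ.rIn_pos hw.le
  simpa using mul_le_mul h1 h2 (norm_nonneg _) zero_le_one

section CStarAlgebra

variable {A : Type*} [CStarAlgebra A] (a : A) [IsStarNormal a]

lemma cfc_id_sub_const (c : ℂ) : cfc (fun w => w - c) a = a - algebraMap ℂ A c := by
  rw [cfc_sub (fun w => w) (fun _ => c) a, cfc_id' ℂ a, cfc_const c a]

lemma cfc_mul_inv_sub_mul_sub_algebraMap {g : ℂ → ℂ} {c : ℂ} (hg : Continuous g)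
    (hc : g =ᶠ[𝓝 c] 0) :
    cfc (fun w => g w * (w - c)⁻¹) a * (a - algebraMap ℂ A c) = cfc g a := by
  rw [← cfc_id_sub_const, ← cfc_mul _ _ a
    (continuous_mul_inv_sub_of_eventuallyEq_zero hg hc).continuousOn]
  exact cfc_congr fun w _ => mul_inv_sub_mul_sub_of_eventuallyEq_zero hc w

lemma commute_cfc_sub_algebraMap (f : ℂ → ℂ) (c : ℂ) :
    Commute (cfc f a) (a - algebraMap ℂ A c) := by
  rw [← cfc_id_sub_const]
  exact cfc_commute_cfc _ _ a

lemma ContDiffBump.exists_one_sub_cfc_eq_mul {μ : ℂ} (φ : ContDiffBump μ) :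
    ∃ b : A, ‖b‖ ≤ φ.rIn⁻¹ ∧
      1 - cfc (fun w => (φ w : ℂ)) a = b * (a - algebraMap ℂ A μ) := by
  have hφ : Continuous fun w => (φ w : ℂ) := Complex.continuous_ofReal.comp φ.continuous
  have hvan : (fun w => 1 - (φ w : ℂ)) =ᶠ[𝓝 μ] 0 := by
    filter_upwards [φ.eventuallyEq_one] with w hw
    simp [hw]
  refine ⟨cfc (fun w => (1 - (φ w : ℂ)) * (w - μ)⁻¹) a,
    norm_cfc_le (inv_nonneg.mpr φ.rIn_pos.le) fun w _ => φ.norm_one_sub_mul_inv_sub_le w, ?_⟩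
  rw [cfc_mul_inv_sub_mul_sub_algebraMap a (g := fun w => 1 - (φ w : ℂ))
    (continuous_const.sub hφ) hvan,
    cfc_sub (fun _ => 1) _ a continuousOn_const hφ.continuousOn, cfc_const_one ℂ a]

end CStarAlgebra

namespace ContinuousLinearMap

variable {𝕜 E : Type*} [NormedField 𝕜] [NormedAddCommGroup E] [NormedSpace 𝕜 E]

def closedRange (P : E →L[𝕜] E) : Submodule 𝕜 E :=
  (LinearMap.range (P : E →ₗ[𝕜] E)).topologicalClosure

lemma isClosed_closedRange (P : E →L[𝕜] E) : IsClosed (P.closedRange : Set E) :=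
  Submodule.isClosed_topologicalClosure _

lemma apply_mem_closedRange (P : E →L[𝕜] E) (x : E) : P x ∈ P.closedRange :=
  Submodule.le_topologicalClosure _ ⟨x, rfl⟩

lemma _root_.Commute.apply_mem_closedRange {P S : E →L[𝕜] E} (h : Commute S P) {v : E}
    (hv : v ∈ P.closedRange) : S v ∈ P.closedRange := by
  refine Submodule.topologicalClosure_minimal (t := P.closedRange.comap (S : E →ₗ[𝕜] E)) _ ?_
    ((isClosed_closedRange P).preimage S.continuous) hv
  rintro _ ⟨u, rfl⟩
  change S (P u) ∈ P.closedRange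
  rw [show S (P u) = P (S u) from congr($(h.eq) u)]
  exact P.apply_mem_closedRange (S u)

lemma apply_eq_self_of_mem_closedRange {P F : E →L[𝕜] E} (h : F * P = P) {v : E}
    (hv : v ∈ P.closedRange) : F v = v := by
  have hker : LinearMap.range (P : E →ₗ[𝕜] E) ≤
      LinearMap.ker ((F - 1 : E →L[𝕜] E) : E →ₗ[𝕜] E) := by
    rintro _ ⟨u, rfl⟩
    simpa [sub_eq_zero] using congr($h u)
  have := Submodule.topologicalClosure_minimal _ hker (F - 1).isClosed_ker hv
  simpa [sub_eq_zero] using this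

end ContinuousLinearMap

section Restriction

variable {H : Type*} [NormedAddCommGroup H] [InnerProductSpace ℂ H]

lemma notMem_spectrum_clmRestrict {T B : H →L[ℂ] H} {V : Submodule ℂ H}
    (hT : ∀ v ∈ V, T v ∈ V) (hB : ∀ v ∈ V, B v ∈ V) {z : ℂ}
    (hleft : ∀ v ∈ V, (B * (T - algebraMap ℂ (H →L[ℂ] H) z)) v = v)
    (hright : ∀ v ∈ V, ((T - algebraMap ℂ (H →L[ℂ] H) z) * B) v = v) :
    z ∉ spectrum ℂ (clmRestrict T V hT) := by
  rw [spectrum.notMem_iff, isUnit_iff_exists]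
  refine ⟨-clmRestrict B V hB, ?_, ?_⟩ <;> ext v
  · simpa [Algebra.algebraMap_eq_smul_one, neg_add_eq_sub] using hright v v.2
  · simpa [Algebra.algebraMap_eq_smul_one] using hleft v v.2

variable [CompleteSpace H]

open ContinuousLinearMap in
theorem spectrum_clmRestrict_closedRange_cfc_subset_tsupport (T : H →L[ℂ] H) [IsStarNormal T]
    {f : ℂ → ℂ} (hf : Continuous f)
    (hT : ∀ v ∈ (cfc f T).closedRange, T v ∈ (cfc f T).closedRange) :
    spectrum ℂ (clmRestrict T (cfc f T).closedRange hT) ⊆ tsupport f := by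
  intro z hz
  by_contra hzf
  obtain ⟨r, hr, hball⟩ := Metric.isOpen_iff.mp (isClosed_tsupport f).isOpen_compl z hzf
  let β : ContDiffBump z := ⟨r / 2, r, half_pos hr, half_lt_self hr⟩
  set ψ : ℂ → ℂ := fun w => 1 - (β w : ℂ)
  have hψ : Continuous ψ := continuous_const.sub (Complex.continuous_ofReal.comp β.continuous)
  have hψz : ψ =ᶠ[𝓝 z] 0 := by
    filter_upwards [β.eventuallyEq_one] with w hw
    simp [ψ, hw]
  have hψf : cfc ψ T * cfc f T = cfc f T := by
    rw [← cfc_mul ψ f T]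
    refine cfc_congr fun w _ => ?_
    by_cases hw : w ∈ tsupport f
    · have : r ≤ dist w z := not_lt.mp fun h => hball h hw
      simp [ψ, β.zero_of_le_dist this]
    · simp [image_eq_zero_of_notMem_tsupport hw]
  set B := cfc (fun w => ψ w * (w - z)⁻¹) T
  have hBT : B * (T - algebraMap ℂ _ z) = cfc ψ T :=
    cfc_mul_inv_sub_mul_sub_algebraMap T hψ hψz
  refine notMem_spectrum_clmRestrict (B := B) hT
    (fun v hv => (cfc_commute_cfc _ f T).apply_mem_closedRange hv) ?_ ?_ hz
  · intro v hv
    rw [hBT]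
    exact apply_eq_self_of_mem_closedRange hψf hv
  · intro v hv
    rw [← (commute_cfc_sub_algebraMap T _ z).eq, hBT]
    exact apply_eq_self_of_mem_closedRange hψf hv

end Restriction

theorem exists_reducing_subspace_of_approx_eigenvector_general {H : Type*} [NormedAddCommGroup H]
    [InnerProductSpace ℂ H] [CompleteSpace H] (ε η : ℝ) (hη : 0 < η)
    (T : H →L[ℂ] H) (hT : IsStarNormal T) (μ : ℂ)
    (x : H) (hTx : ‖T x - μ • x‖ < ε * η / 2) :
    ∃ (V : Submodule ℂ H) (hVT : ∀ v ∈ V, T v ∈ V),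
      IsClosed (V : Set H) ∧
      (∀ v ∈ V, ContinuousLinearMap.adjoint T v ∈ V) ∧
      spectrum ℂ (clmRestrict T V hVT) ⊆ Metric.closedBall μ η ∧
      ∃ y ∈ V, ‖x - y‖ < ε := by
  let φ : ContDiffBump μ := ⟨η / 2, η, half_pos hη, half_lt_self hη⟩
  set f : ℂ → ℂ := fun w => (φ w : ℂ)
  have hf : Continuous f := Complex.continuous_ofReal.comp φ.continuous
  -- `f` stands in for the indicator of `B(μ; η)`, so `P.closedRange` plays the role of the range
  -- of the spectral projection `E(B(μ; η))`.
  set P := cfc f T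
  have hVT (v) (hv : v ∈ P.closedRange) : T v ∈ P.closedRange :=
    ((Commute.refl T).cfc hT.star_comm_self f).symm.apply_mem_closedRange hv
  obtain ⟨b, hb, hPb⟩ := φ.exists_one_sub_cfc_eq_mul T
  refine ⟨P.closedRange, hVT, P.isClosed_closedRange, fun v hv => ?_, ?_, P x,
    P.apply_mem_closedRange x, ?_⟩
  · rw [← ContinuousLinearMap.star_eq_adjoint]
    exact (hT.star_comm_self.symm.cfc (Commute.refl _) f).symm.apply_mem_closedRange hv
  · have : tsupport f = tsupport φ := tsupport_comp_eq Complex.ofReal_eq_zero φ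
    rw [← φ.tsupport_eq, ← this]
    exact spectrum_clmRestrict_closedRange_cfc_subset_tsupport T hf hVT
  · have hxP : x - P x = b (T x - μ • x) := by
      simpa [Algebra.algebraMap_eq_smul_one] using congr($hPb x)
    calc ‖x - P x‖ ≤ ‖b‖ * ‖T x - μ • x‖ := hxP ▸ b.le_opNorm _
      _ ≤ (η / 2)⁻¹ * ‖T x - μ • x‖ := by gcongr
      _ < (η / 2)⁻¹ * (ε * η / 2) := by gcongr
      _ = ε := by field_simp

/-- Let `ε, η > 0` and `δ = ε * η / 2`.  Let `T` be a bounded normal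
operator on a complex Hilbert space `H`, `μ ∈ σ(T)`, and `x` a unit vector with
`‖T x - μ x‖ < δ`.  Then there is a closed subspace `V` of `H`, invariant under both `T`
and its adjoint, such that the spectrum of the restriction of `T` to `V` is contained in
the closed ball of radius `η` about `μ`, and there is `y ∈ V` with `‖x - y‖ < ε`. -/
theorem exists_reducing_subspace_of_approx_eigenvector {H : Type*} [NormedAddCommGroup H]
    [InnerProductSpace ℂ H] [CompleteSpace H] (ε η : ℝ) (hε : 0 < ε) (hη : 0 < η)
    (T : H →L[ℂ] H) (hT : IsStarNormal T) (μ : ℂ) (hμ : μ ∈ spectrum ℂ T)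
    (x : H) (hx : ‖x‖ = 1) (hTx : ‖T x - μ • x‖ < ε * η / 2) :
    ∃ (V : Submodule ℂ H) (hVT : ∀ v ∈ V, T v ∈ V),
      IsClosed (V : Set H) ∧
      (∀ v ∈ V, ContinuousLinearMap.adjoint T v ∈ V) ∧
      spectrum ℂ (clmRestrict T V hVT) ⊆ Metric.closedBall μ η ∧
      ∃ y ∈ V, ‖x - y‖ < ε :=
  exists_reducing_subspace_of_approx_eigenvector_general ε η hη T hT μ x hTx
end

section
/- Let ε, η > 0, let T be a bounded normal operator on a complex Hilbert space H, and let λ ∈ σ(T) be such that |λ′ − λ| ≥ η for every λ′ ∈ σ(T) \ {λ}. If x ∈ H is a unit vector with ‖Tx − λx‖ < ε·η/2, then the distance from x to the eigenspace ker(T − λ·I) is less than ε. -/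
/-!
Let `r` be the function equal to `(z - μ)⁻¹` away from `μ` and to `0` at `μ`. Because `μ` is
isolated in `σ(T)` by a gap `η`, `r` is continuous on `σ(T)` and bounded there by `η⁻¹`, so
`R = r(T)` exists by the continuous functional calculus of the normal operator `T`, with
`‖R‖ ≤ η⁻¹` and `(T - μ) R (T - μ) = T - μ`. Hence `x - R (T - μ) x` lies in `ker (T - μ)`
and is at distance `‖R (T - μ) x‖ ≤ ‖T x - μ x‖ / η < ε / 2` from `x`.
-/

noncomputable def reducedResolvent (μ z : ℂ) : ℂ :=
  if z = μ then 0 else (z - μ)⁻¹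

section reducedResolvent

variable {s : Set ℂ} {μ : ℂ} {η : ℝ}

lemma sub_mul_reducedResolvent_mul_sub (μ z : ℂ) :
    (z - μ) * reducedResolvent μ z * (z - μ) = z - μ := by
  by_cases hz : z = μ
  · simp [hz]
  · rw [reducedResolvent, if_neg hz, mul_inv_cancel₀ (sub_ne_zero.mpr hz), one_mul]

lemma norm_reducedResolvent_le (hη : 0 < η) (hsep : ∀ z ∈ s, z ≠ μ → η ≤ ‖z - μ‖)
    {z : ℂ} (hz : z ∈ s) : ‖reducedResolvent μ z‖ ≤ η⁻¹ := by
  by_cases hzμ : z = μ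
  · simpa [reducedResolvent, hzμ] using hη.le
  · rw [reducedResolvent, if_neg hzμ, norm_inv]
    exact inv_anti₀ hη (hsep z hz hzμ)

lemma continuousOn_reducedResolvent (hη : 0 < η) (hsep : ∀ z ∈ s, z ≠ μ → η ≤ ‖z - μ‖) :
    ContinuousOn (reducedResolvent μ) s := by
  intro z hz
  by_cases hzμ : z = μ
  · subst hzμ
    -- the gap makes `z` an isolated point of `s`, where `reducedResolvent z` vanishes
    refine continuousWithinAt_const.congr_of_eventuallyEq (f := fun _ ↦ 0) ?_
      (by simp [reducedResolvent])
    filter_upwards [inter_mem_nhdsWithin s (Metric.ball_mem_nhds z hη)] with w ⟨hws, hwb⟩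
    have hwz : w = z := by
      by_contra hwz
      exact (hsep w hws hwz).not_gt (by simpa [dist_eq_norm] using hwb)
    simp [reducedResolvent, hwz]
  · have hinv : (fun w ↦ (w - μ)⁻¹) =ᶠ[nhds z] reducedResolvent μ := by
      filter_upwards [isOpen_ne.mem_nhds hzμ] with w hw
      simp [reducedResolvent, hw]
    exact ((continuousAt_id.sub continuousAt_const).inv₀ (sub_ne_zero.mpr hzμ)).congr hinv
      |>.continuousWithinAt

end reducedResolvent

section CStarAlgebra

variable {A : Type*} [CStarAlgebra A] {a : A} {μ : ℂ} {η : ℝ}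

lemma norm_cfc_reducedResolvent_le (hη : 0 < η)
    (hsep : ∀ z ∈ spectrum ℂ a, z ≠ μ → η ≤ ‖z - μ‖) :
    ‖cfc (reducedResolvent μ) a‖ ≤ η⁻¹ :=
  norm_cfc_le (inv_nonneg.mpr hη.le) fun _ hz ↦ norm_reducedResolvent_le hη hsep hz

lemma sub_mul_cfc_reducedResolvent_mul_sub [IsStarNormal a] (hη : 0 < η)
    (hsep : ∀ z ∈ spectrum ℂ a, z ≠ μ → η ≤ ‖z - μ‖) :
    (a - algebraMap ℂ A μ) * cfc (reducedResolvent μ) a * (a - algebraMap ℂ A μ) =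
      a - algebraMap ℂ A μ := by
  have hc := continuousOn_reducedResolvent hη hsep
  have hsub : a - algebraMap ℂ A μ = cfc (fun z ↦ z - μ) a := by
    rw [cfc_sub .., cfc_id' ℂ a, cfc_const μ a]
  rw [hsub, ← cfc_mul .., ← cfc_mul ..]
  exact cfc_congr fun z _ ↦ sub_mul_reducedResolvent_mul_sub μ z

end CStarAlgebra

lemma infDist_ker_le_of_mul_mul_eq_self {𝕜 E : Type*} [NontriviallyNormedField 𝕜]
    [NormedAddCommGroup E] [NormedSpace 𝕜 E] {S R : E →L[𝕜] E} (hSRS : S * R * S = S) (x : E) :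
    Metric.infDist x (LinearMap.ker (S : E →ₗ[𝕜] E) : Set E) ≤ ‖R‖ * ‖S x‖ := by
  have hmem : x - R (S x) ∈ LinearMap.ker (S : E →ₗ[𝕜] E) := by
    simpa [sub_eq_zero] using (congrArg (· x) hSRS).symm
  calc Metric.infDist x (LinearMap.ker (S : E →ₗ[𝕜] E) : Set E)
      ≤ dist x (x - R (S x)) := Metric.infDist_le_dist_of_mem hmem
    _ = ‖R (S x)‖ := by rw [dist_eq_norm, sub_sub_cancel]
    _ ≤ ‖R‖ * ‖S x‖ := R.le_opNorm _

theorem infDist_eigenspace_lt_general {H : Type*} [NormedAddCommGroup H]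
    [InnerProductSpace ℂ H] [CompleteSpace H] (ε η : ℝ) (hη : 0 < η)
    (T : H →L[ℂ] H) (hT : IsStarNormal T) (μ : ℂ)
    (hsep : ∀ μ' ∈ spectrum ℂ T, μ' ≠ μ → η ≤ ‖μ' - μ‖)
    (x : H) (hTx : ‖T x - μ • x‖ < ε * η / 2) :
    Metric.infDist x (LinearMap.ker ((T - μ • (1 : H →L[ℂ] H)) : H →ₗ[ℂ] H) : Set H) < ε := by
  have hε : 0 < ε := by nlinarith [norm_nonneg (T x - μ • x)]
  have hSRS := sub_mul_cfc_reducedResolvent_mul_sub hη hsep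
  rw [Algebra.algebraMap_eq_smul_one] at hSRS
  calc Metric.infDist x (LinearMap.ker ((T - μ • (1 : H →L[ℂ] H)) : H →ₗ[ℂ] H) : Set H)
      ≤ ‖cfc (reducedResolvent μ) T‖ * ‖T x - μ • x‖ := by
        simpa using infDist_ker_le_of_mul_mul_eq_self hSRS x
    _ ≤ η⁻¹ * ‖T x - μ • x‖ := by gcongr; exact norm_cfc_reducedResolvent_le hη hsep
    _ < η⁻¹ * (ε * η / 2) := by gcongr
    _ = ε / 2 := by field_simp
    _ < ε := half_lt_self hε

/-- Let `ε, η > 0`, let `T` be a bounded normal operator on a complex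
Hilbert space `H`, and let `μ ∈ σ(T)` be at distance at least `η` from every other point of
the spectrum.  If `x` is a unit vector with `‖T x - μ x‖ < ε * η / 2`, then the distance from
`x` to the eigenspace `ker (T - μ)` is less than `ε`. -/
theorem infDist_eigenspace_lt {H : Type*} [NormedAddCommGroup H]
    [InnerProductSpace ℂ H] [CompleteSpace H] (ε η : ℝ) (hε : 0 < ε) (hη : 0 < η)
    (T : H →L[ℂ] H) (hT : IsStarNormal T) (μ : ℂ) (hμ : μ ∈ spectrum ℂ T)
    (hsep : ∀ μ' ∈ spectrum ℂ T, μ' ≠ μ → η ≤ ‖μ' - μ‖)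
    (x : H) (hx : ‖x‖ = 1) (hTx : ‖T x - μ • x‖ < ε * η / 2) :
    Metric.infDist x (LinearMap.ker ((T - μ • (1 : H →L[ℂ] H)) : H →ₗ[ℂ] H) : Set H) < ε :=
  infDist_eigenspace_lt_general ε η hη T hT μ hsep x hTx
end

section
/- For every natural number n ≥ 1 and every η > 0 there exists δ > 0 with the following property: whenever T is a bounded normal operator on a complex Hilbert space H, λ ∈ σ(T) satisfies |λ′ − λ| ≥ η for every λ′ ∈ σ(T) \ {λ}, and x₁, …, xₙ ∈ H is an orthonormal family with ‖Txᵢ − λxᵢ‖ < δ for each i, then the eigenspace ker(T − λ·I) has dimension at least n (i.e. it contains n linearly independent vectors). -/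
/-! Let `g z = (z - μ)⁻¹`, which is `0` at `z = μ` by the convention `0⁻¹ = 0`. Since `μ` is
at distance `≥ η` from the rest of `σ(T)`, `g` is continuous on `σ(T)` and bounded there by
`η⁻¹`, so `B = g(T)` has `‖B‖ ≤ η⁻¹` and `D B D = D` for `D = T - μ`, because
`w * w⁻¹ * w = w` holds for every complex `w`. Hence `yᵢ = xᵢ - B D xᵢ` lies in `ker D` and
`‖xᵢ - yᵢ‖ ≤ δ / η`. A family this close to an orthonormal one is linearly independent: if
`∑ cᵢ yᵢ = 0`, then `|cⱼ| = |⟪xⱼ, ∑ cᵢ (xᵢ - yᵢ)⟫| ≤ (δ / η) ∑ |cᵢ|`, and summing over `j`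
forces all `cᵢ = 0` once `n δ / η < 1`. -/

open Finset in
theorem Orthonormal.linearIndependent_of_norm_sub_le {𝕜 E ι : Type*} [RCLike 𝕜]
    [NormedAddCommGroup E] [InnerProductSpace 𝕜 E] [Fintype ι] {x y : ι → E}
    (hx : Orthonormal 𝕜 x) {ε : ℝ} (hε : Fintype.card ι * ε < 1)
    (hxy : ∀ i, ‖x i - y i‖ ≤ ε) : LinearIndependent 𝕜 y := by
  rw [Fintype.linearIndependent_iff]
  intro c hc
  set S := ∑ i, ‖c i‖
  have hcoeff : ∀ j, ‖c j‖ ≤ S * ε := fun j => calc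
    ‖c j‖ = ‖inner 𝕜 (x j) (∑ i, c i • x i)‖ := by rw [hx.inner_right_fintype]
    _ ≤ ‖∑ i, c i • x i‖ := by simpa [hx.1 j] using norm_inner_le_norm (𝕜 := 𝕜) (x j) _
    _ = ‖∑ i, c i • (x i - y i)‖ := by simp only [smul_sub, sum_sub_distrib, hc, sub_zero]
    _ ≤ ∑ i, ‖c i‖ * ε := norm_sum_le_of_le _ fun i _ => by
          rw [norm_smul]; exact mul_le_mul_of_nonneg_left (hxy i) (norm_nonneg _)
    _ = S * ε := by rw [sum_mul]
  have hS : S ≤ 0 := by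
    have : S ≤ Fintype.card ι * (S * ε) := by
      simpa using sum_le_sum fun j (_ : j ∈ univ) => hcoeff j
    nlinarith [sum_nonneg fun i (_ : i ∈ univ) => norm_nonneg (c i)]
  intro i
  exact norm_eq_zero.mp <| le_antisymm
    ((single_le_sum (fun j _ => norm_nonneg (c j)) (mem_univ i)).trans hS) (norm_nonneg _)

theorem continuousOn_inv_sub_of_le_norm_sub {s : Set ℂ} {μ : ℂ} {η : ℝ} (hη : 0 < η)
    (hs : ∀ z ∈ s, z ≠ μ → η ≤ ‖z - μ‖) : ContinuousOn (fun z => (z - μ)⁻¹) s := by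
  intro z hz
  rcases eq_or_ne z μ with rfl | hne
  · refine continuousWithinAt_const.congr_of_eventuallyEq ?_ rfl
    filter_upwards [inter_mem_nhdsWithin s (Metric.ball_mem_nhds z hη)] with w ⟨hws, hwz⟩
    by_contra h
    have : w ≠ z := by rintro rfl; exact h rfl
    exact (hs w hws this).not_gt (by simpa [dist_eq_norm] using hwz)
  · exact ((continuousAt_id.sub continuousAt_const).inv₀ (sub_ne_zero.mpr hne)).continuousWithinAt

section IsolatedSpectralPoint

variable {A : Type*} [CStarAlgebra A] {a : A} {μ : ℂ}

theorem sub_algebraMap_mul_cfc_inv_sub_mul_self [IsStarNormal a]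
    (h : ContinuousOn (fun z => (z - μ)⁻¹) (spectrum ℂ a)) :
    (a - algebraMap ℂ A μ) * cfc (fun z => (z - μ)⁻¹) a * (a - algebraMap ℂ A μ) =
      a - algebraMap ℂ A μ := by
  have hd : a - algebraMap ℂ A μ = cfc (fun z => z - μ) a := by
    rw [cfc_sub _ _ a, cfc_id' ℂ a, cfc_const μ a]
  rw [hd, ← cfc_mul _ _ a, ← cfc_mul _ _ a]
  exact cfc_congr fun z _ => mul_inv_mul_cancel (z - μ)

theorem norm_cfc_inv_sub_le {η : ℝ} (hη : 0 < η)
    (hs : ∀ z ∈ spectrum ℂ a, z ≠ μ → η ≤ ‖z - μ‖) :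
    ‖cfc (fun z => (z - μ)⁻¹) a‖ ≤ η⁻¹ := by
  refine norm_cfc_le (by positivity) fun z hz => ?_
  rcases eq_or_ne z μ with rfl | hne
  · simp [hη.le]
  · rw [norm_inv]; exact inv_anti₀ hη (hs z hz hne)

end IsolatedSpectralPoint

theorem eigenspace_dim_ge_of_approx_orthonormal_general (n : ℕ) (η : ℝ) (hη : 0 < η) :
    ∃ δ > (0 : ℝ), ∀ (H : Type*) [NormedAddCommGroup H] [InnerProductSpace ℂ H]
      [CompleteSpace H] (T : H →L[ℂ] H), IsStarNormal T →
      ∀ μ ∈ spectrum ℂ T, (∀ μ' ∈ spectrum ℂ T, μ' ≠ μ → η ≤ ‖μ' - μ‖) →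
      ∀ x : Fin n → H, Orthonormal ℂ x → (∀ i, ‖T (x i) - μ • x i‖ < δ) →
      ∃ y : Fin n → H, (∀ i, y i ∈ LinearMap.ker (↑(T - μ • (1 : H →L[ℂ] H)) : H →ₗ[ℂ] H)) ∧
        LinearIndependent ℂ y := by
  refine ⟨η / (n + 1), by positivity, fun H _ _ _ T hT μ _ hsep x hx hδ => ?_⟩
  set d := T - μ • (1 : H →L[ℂ] H)
  set b := cfc (fun z => (z - μ)⁻¹) T
  have hdbd : d * b * d = d := by
    have := hT
    simpa only [Algebra.algebraMap_eq_smul_one] using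
      sub_algebraMap_mul_cfc_inv_sub_mul_self (continuousOn_inv_sub_of_le_norm_sub hη hsep)
  refine ⟨fun i => x i - b (d (x i)), fun i => ?_, ?_⟩
  · simpa [sub_eq_zero] using (congrArg (· (x i)) hdbd).symm
  · refine hx.linearIndependent_of_norm_sub_le (ε := 1 / (n + 1)) ?_ fun i => ?_
    · rw [Fintype.card_fin, mul_one_div, div_lt_one (by positivity)]
      linarith
    · calc ‖x i - (x i - b (d (x i)))‖ = ‖b (d (x i))‖ := by rw [sub_sub_cancel]
        _ ≤ η⁻¹ * (η / (n + 1)) := by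
          refine (b.le_opNorm _).trans (mul_le_mul (norm_cfc_inv_sub_le hη hsep) ?_
            (norm_nonneg _) (by positivity))
          simpa [d] using (hδ i).le
        _ = 1 / (n + 1) := by field_simp

/-- For every `n ≥ 1` and `η > 0` there is `δ > 0` such that whenever `T`
is a bounded normal operator on a complex Hilbert space `H`, `μ ∈ σ(T)` is at distance at
least `η` from every other point of the spectrum, and `x₁, …, xₙ` is an orthonormal family
with `‖T xᵢ - μ xᵢ‖ < δ` for each `i`, then the eigenspace `ker (T - μ)` contains `n`
linearly independent vectors. -/
theorem eigenspace_dim_ge_of_approx_orthonormal (n : ℕ) (hn : 1 ≤ n) (η : ℝ) (hη : 0 < η) :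
    ∃ δ > (0 : ℝ), ∀ (H : Type*) [NormedAddCommGroup H] [InnerProductSpace ℂ H]
      [CompleteSpace H] (T : H →L[ℂ] H), IsStarNormal T →
      ∀ μ ∈ spectrum ℂ T, (∀ μ' ∈ spectrum ℂ T, μ' ≠ μ → η ≤ ‖μ' - μ‖) →
      ∀ x : Fin n → H, Orthonormal ℂ x → (∀ i, ‖T (x i) - μ • x i‖ < δ) →
      ∃ y : Fin n → H, (∀ i, y i ∈ LinearMap.ker (↑(T - μ • (1 : H →L[ℂ] H)) : H →ₗ[ℂ] H)) ∧
        LinearIndependent ℂ y :=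
  eigenspace_dim_ge_of_approx_orthonormal_general n η hη
end

section
/- Let T₁ and T₂ be bounded normal operators on complex Hilbert spaces H₁ and H₂ with ‖T₁‖ ≤ 1 and ‖T₂‖ ≤ 1, and let f : ℂ → ℂ be a continuous function. Suppose (Uₙ) is a sequence of unitary operators Uₙ : H₁ → H₂ such that ‖Uₙ T₁ Uₙ* − T₂‖ → 0 as n → ∞. Then ‖Uₙ f(T₁) Uₙ* − f(T₂)‖ → 0 as n → ∞, where f(Tᵢ) denotes the continuous functional calculus of f applied to the normal operator Tᵢ. -/
/-!
Conjugation by a unitary is a ⋆-isomorphism `B(H₁) ≃⋆ₐ B(H₂)`, so it commutes with the continuous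
functional calculus: `Uₙ f(T₁) Uₙ* = f(Uₙ T₁ Uₙ*)`. It remains to see that `a ↦ f(a)` is continuous
on normal operators, which holds because the spectra of all operators near `T₂` lie in one
compact ball, on which `f` is uniformly approximated by ⋆-polynomials.
-/

open scoped Topology
open Filter Metric

/-- Conjugation of a bounded operator on `H₁` by a unitary (surjective linear isometry)
`U : H₁ ≃ₗᵢ[ℂ] H₂`, yielding the operator `U T U⁻¹ = U T U*` on `H₂`. -/
noncomputable def unitaryConj {H₁ H₂ : Type*}
    [NormedAddCommGroup H₁] [InnerProductSpace ℂ H₁]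
    [NormedAddCommGroup H₂] [InnerProductSpace ℂ H₂]
    (U : H₁ ≃ₗᵢ[ℂ] H₂) (T : H₁ →L[ℂ] H₁) : H₂ →L[ℂ] H₂ :=
  U.toLinearIsometry.toContinuousLinearMap ∘L T ∘L
    U.symm.toLinearIsometry.toContinuousLinearMap

section Continuity

variable {X 𝕜 A : Type*} {p : A → Prop} [RCLike 𝕜] [NormedRing A] [StarRing A]
  [NormedAlgebra 𝕜 A] [CompleteSpace A]
  [IsometricContinuousFunctionalCalculus 𝕜 A p] [ContinuousStar A]

theorem Filter.Tendsto.cfc_of_continuous (f : 𝕜 → 𝕜) (hf : Continuous f) {a : X → A} {a₀ : A}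
    {l : Filter X} (ha : Tendsto a l (𝓝 a₀)) (ha' : ∀ᶠ x in l, p (a x)) (ha₀' : p a₀) :
    Tendsto (fun x ↦ cfc f (a x)) l (𝓝 (cfc f a₀)) := by
  have hspec : ∀ b : A, ‖b‖ ≤ ‖a₀‖ + 1 →
      spectrum 𝕜 b ⊆ closedBall 0 ((‖a₀‖ + 1) * ‖(1 : A)‖) := fun b hb ↦
    (spectrum.subset_closedBall_norm_mul b).trans
      (closedBall_subset_closedBall (by gcongr))
  refine ha.cfc (isCompact_closedBall 0 _) f ?_ ha' (hspec a₀ (by linarith)) ha₀'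
    hf.continuousOn
  filter_upwards [ha.norm.eventually (gt_mem_nhds (lt_add_one ‖a₀‖))] with x hx
  exact hspec _ hx.le

end Continuity

section UnitaryConj

variable {H₁ H₂ : Type*}
  [NormedAddCommGroup H₁] [InnerProductSpace ℂ H₁] [CompleteSpace H₁]
  [NormedAddCommGroup H₂] [InnerProductSpace ℂ H₂] [CompleteSpace H₂]

theorem unitaryConj_eq_conjStarAlgEquiv (U : H₁ ≃ₗᵢ[ℂ] H₂) (T : H₁ →L[ℂ] H₁) :
    unitaryConj U T = U.conjStarAlgEquiv T :=
  rfl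

theorem IsStarNormal.unitaryConj {T : H₁ →L[ℂ] H₁} (hT : IsStarNormal T) (U : H₁ ≃ₗᵢ[ℂ] H₂) :
    IsStarNormal (unitaryConj U T) := by
  rw [unitaryConj_eq_conjStarAlgEquiv]
  exact hT.map U.conjStarAlgEquiv

theorem unitaryConj_cfc (U : H₁ ≃ₗᵢ[ℂ] H₂) (f : ℂ → ℂ) {T : H₁ →L[ℂ] H₁}
    (hT : IsStarNormal T) (hf : ContinuousOn f (spectrum ℂ T)) :
    unitaryConj U (cfc f T) = cfc f (unitaryConj U T) := by
  have hnormal := hT.unitaryConj U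
  simp only [unitaryConj_eq_conjStarAlgEquiv] at hnormal ⊢
  exact StarAlgHomClass.map_cfc U.conjStarAlgEquiv f T hf
    (StarAlgEquiv.isometry U.conjStarAlgEquiv).continuous hT hnormal

end UnitaryConj

theorem tendsto_cfc_of_tendsto_unitaryConj_general {H₁ H₂ : Type*}
    [NormedAddCommGroup H₁] [InnerProductSpace ℂ H₁] [CompleteSpace H₁]
    [NormedAddCommGroup H₂] [InnerProductSpace ℂ H₂] [CompleteSpace H₂]
    (T₁ : H₁ →L[ℂ] H₁) (T₂ : H₂ →L[ℂ] H₂)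
    (hT₁ : IsStarNormal T₁) (hT₂ : IsStarNormal T₂)
    (f : ℂ → ℂ) (hf : Continuous f)
    (U : ℕ → (H₁ ≃ₗᵢ[ℂ] H₂))
    (hU : Filter.Tendsto (fun n => ‖unitaryConj (U n) T₁ - T₂‖) Filter.atTop (𝓝 0)) :
    Filter.Tendsto (fun n => ‖unitaryConj (U n) (cfc f T₁) - cfc f T₂‖)
      Filter.atTop (𝓝 0) := by
  have hconj : Tendsto (fun n ↦ unitaryConj (U n) T₁) atTop (𝓝 T₂) :=
    tendsto_iff_norm_sub_tendsto_zero.mpr hU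
  have hcfc := hconj.cfc_of_continuous f hf (.of_forall fun n ↦ hT₁.unitaryConj (U n)) hT₂
  simpa only [unitaryConj_cfc _ f hT₁ hf.continuousOn] using
    tendsto_iff_norm_sub_tendsto_zero.mp hcfc

/-- Let `T₁`, `T₂` be bounded normal operators of norm at most `1` on
complex Hilbert spaces `H₁`, `H₂`, let `f : ℂ → ℂ` be continuous, and let `(Uₙ)` be a
sequence of unitaries `H₁ → H₂` with `‖Uₙ T₁ Uₙ* - T₂‖ → 0`.  Then
`‖Uₙ f(T₁) Uₙ* - f(T₂)‖ → 0`, where `f(Tᵢ)` is given by the continuous functional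
calculus. -/
theorem tendsto_cfc_of_tendsto_unitaryConj {H₁ H₂ : Type*}
    [NormedAddCommGroup H₁] [InnerProductSpace ℂ H₁] [CompleteSpace H₁]
    [NormedAddCommGroup H₂] [InnerProductSpace ℂ H₂] [CompleteSpace H₂]
    (T₁ : H₁ →L[ℂ] H₁) (T₂ : H₂ →L[ℂ] H₂)
    (hT₁ : IsStarNormal T₁) (hT₂ : IsStarNormal T₂)
    (hn₁ : ‖T₁‖ ≤ 1) (hn₂ : ‖T₂‖ ≤ 1)
    (f : ℂ → ℂ) (hf : Continuous f)
    (U : ℕ → (H₁ ≃ₗᵢ[ℂ] H₂))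
    (hU : Filter.Tendsto (fun n => ‖unitaryConj (U n) T₁ - T₂‖) Filter.atTop (𝓝 0)) :
    Filter.Tendsto (fun n => ‖unitaryConj (U n) (cfc f T₁) - cfc f T₂‖)
      Filter.atTop (𝓝 0) :=
  tendsto_cfc_of_tendsto_unitaryConj_general T₁ T₂ hT₁ hT₂ f hf U hU
end

section
/- Let T₁ and T₂ be bounded normal operators on complex Hilbert spaces H₁ and H₂ such that σ(T₁) = σ(T₂) = K with K a finite set, and suppose that for each λ ∈ K the eigenspaces ker(T₁ − λ·I) and ker(T₂ − λ·I) admit total orthonormal families (Hilbert bases) of the same cardinality. Then there exists a unitary operator U : H₁ → H₂ with U T₁ = T₂ U. -/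
/-!
A normal operator `T` with finite spectrum is diagonalisable: the continuous functional calculus
turns the indicator functions of the points of `σ(T)` into operators `P_μ` with `∑ P_μ = 1` and
`T P_μ = μ P_μ`, so the eigenspaces span `H`, and they are mutually orthogonal because
`ker (T - μ) = ker (T - μ)*` for normal `T`. Hence `H₁` and `H₂` are finite orthogonal direct sums
of the eigenspaces of `T₁` and `T₂`. Equipotent Hilbert bases give unitaries between corresponding
eigenspaces, and their direct sum conjugates `T₁` to `T₂`, since both act as `μ` on the `μ`-th
summand.
-/

universe u₁ u₂

open Module.End ContinuousLinearMap Cardinal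
open scoped InnerProductSpace

theorem IsStarNormal.sub_smul_one {R A : Type*} [CommRing R] [StarRing R] [Ring A] [StarRing A]
    [Algebra R A] [StarModule R A] {a : A} (ha : IsStarNormal a) (μ : R) :
    IsStarNormal (a - μ • 1) :=
  Commute.isStarNormal_sub (by rw [star_smul, star_one]; exact (Commute.one_right a).smul_right _)

theorem ContinuousLinearMap.ker_sub_smul_one {R M : Type*} [CommRing R] [TopologicalSpace M]
    [AddCommGroup M] [IsTopologicalAddGroup M] [Module R M] [ContinuousConstSMul R M]
    (T : M →L[R] M) (μ : R) :
    LinearMap.ker (↑(T - μ • 1) : M →ₗ[R] M) = eigenspace (T : M →ₗ[R] M) μ := by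
  ext x
  simp [sub_eq_zero]

theorem LinearMap.comp_eq_comp_of_mapsTo_eigenspace {R M N : Type*} [CommRing R]
    [AddCommGroup M] [Module R M] [AddCommGroup N] [Module R N] {f : Module.End R M}
    {g : Module.End R N} {U : M →ₗ[R] N} {ι : Type*} {μ : ι → R}
    (hf : ⨆ i, eigenspace f (μ i) = ⊤)
    (hU : ∀ i, Set.MapsTo U (eigenspace f (μ i)) (eigenspace g (μ i))) :
    U ∘ₗ f = g ∘ₗ U := by
  refine LinearMap.eqLocus_eq_top.mp (eq_top_iff.mpr (hf ▸ iSup_le fun i x hx => ?_))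
  have hUx : g (U x) = μ i • U x := mem_eigenspace_iff.mp (hU i hx)
  rw [mem_eigenspace_iff] at hx
  simp [LinearMap.mem_eqLocus, hx, hUx]

section FiniteSpectrum

variable {A : Type*} [CStarAlgebra A] {a : A}

theorem IsStarNormal.sum_cfc_single_eq_one (ha : IsStarNormal a) (h : (spectrum ℂ a).Finite) :
    ∑ μ ∈ h.toFinset, cfc (Pi.single μ (1 : ℂ)) a = 1 := by
  rw [← cfc_sum _ _ _ fun _ _ => h.continuousOn _, ← cfc_one ℂ a]
  refine cfc_congr fun z hz => ?_
  simp [Finset.sum_apply, Pi.single_apply, h.mem_toFinset.mpr hz]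

theorem IsStarNormal.mul_cfc_single (ha : IsStarNormal a) (h : (spectrum ℂ a).Finite) (μ : ℂ) :
    a * cfc (Pi.single μ (1 : ℂ)) a = μ • cfc (Pi.single μ (1 : ℂ)) a := by
  conv_lhs => arg 1; rw [← cfc_id' ℂ a]
  rw [← cfc_mul _ _ _ (h.continuousOn _) (h.continuousOn _), ← cfc_smul _ _ _ (h.continuousOn _)]
  refine cfc_congr fun z _ => ?_
  by_cases hz : z = μ <;> simp [hz]

end FiniteSpectrum

section NormalOperator

variable {𝕜 H : Type*} [RCLike 𝕜] [NormedAddCommGroup H] [InnerProductSpace 𝕜 H]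
  [CompleteSpace H]

theorem IsStarNormal.adjoint_apply_of_mem_eigenspace {T : H →L[𝕜] H} (hT : IsStarNormal T)
    {μ : 𝕜} {x : H} (hx : x ∈ eigenspace (T : H →ₗ[𝕜] H) μ) : adjoint T x = star μ • x := by
  have hker : x ∈ (adjoint (T - μ • 1)).ker := by
    rw [(hT.sub_smul_one μ).ker_adjoint_eq_ker]
    exact (T.ker_sub_smul_one μ).ge hx
  rw [← star_eq_adjoint, star_sub, star_smul, star_one] at hker
  simpa [sub_eq_zero, star_eq_adjoint] using hker

theorem IsStarNormal.orthogonalFamily_eigenspaces {T : H →L[𝕜] H} (hT : IsStarNormal T) :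
    OrthogonalFamily 𝕜 (fun μ : 𝕜 => eigenspace (T : H →ₗ[𝕜] H) μ)
      (fun μ => (eigenspace (T : H →ₗ[𝕜] H) μ).subtypeₗᵢ) := by
  rintro μ ν hμν ⟨x, hx⟩ ⟨y, hy⟩
  have hx' := hT.adjoint_apply_of_mem_eigenspace hx
  rw [mem_eigenspace_iff, coe_coe] at hy
  have key : μ * ⟪x, y⟫_𝕜 = ν * ⟪x, y⟫_𝕜 :=
    calc μ * ⟪x, y⟫_𝕜 = ⟪adjoint T x, y⟫_𝕜 := by rw [hx', inner_smul_left]; simp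
      _ = ⟪x, T y⟫_𝕜 := adjoint_inner_left T y x
      _ = ν * ⟪x, y⟫_𝕜 := by rw [hy, inner_smul_right]
  simpa using (mul_eq_mul_right_iff.mp key).resolve_left hμν

end NormalOperator

section FiniteSpectrumOperator

variable {H : Type*} [NormedAddCommGroup H] [InnerProductSpace ℂ H] [CompleteSpace H]

theorem IsStarNormal.iSup_eigenspace_eq_top {T : H →L[ℂ] H} (hT : IsStarNormal T)
    (h : (spectrum ℂ T).Finite) {K : Set ℂ} (hK : spectrum ℂ T ⊆ K) :
    ⨆ μ : K, eigenspace (T : H →ₗ[ℂ] H) μ = ⊤ := by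
  refine eq_top_iff.mpr fun x _ => ?_
  have hx := congr($(hT.sum_cfc_single_eq_one h) x)
  rw [sum_apply, one_apply_eq_self] at hx
  rw [← hx]
  refine Submodule.sum_mem _ fun μ hμ =>
    Submodule.mem_iSup_of_mem ⟨μ, hK (h.mem_toFinset.mp hμ)⟩ ?_
  rw [mem_eigenspace_iff, coe_coe]
  exact congr($(hT.mul_cfc_single h μ) x)

theorem IsStarNormal.isInternal_eigenspaces {T : H →L[ℂ] H} (hT : IsStarNormal T)
    (h : (spectrum ℂ T).Finite) {K : Set ℂ} [DecidableEq K] (hK : spectrum ℂ T ⊆ K) :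
    DirectSum.IsInternal fun μ : K => eigenspace (T : H →ₗ[ℂ] H) μ :=
  (DirectSum.isInternal_submodule_iff_iSupIndep_and_iSup_eq_top _).mpr
    ⟨(hT.orthogonalFamily_eigenspaces.comp Subtype.val_injective).independent,
      hT.iSup_eigenspace_eq_top h hK⟩

end FiniteSpectrumOperator

section HilbertSpace

variable {𝕜 E F : Type*} [RCLike 𝕜]
  [NormedAddCommGroup E] [InnerProductSpace 𝕜 E] [NormedAddCommGroup F] [InnerProductSpace 𝕜 F]

noncomputable def Submodule.hilbertBasisOfOrthonormal [CompleteSpace E] {V : Submodule 𝕜 E}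
    {s : Set E} (hs : Orthonormal 𝕜 ((↑) : s → E))
    (hV : (Submodule.span 𝕜 s).topologicalClosure = V) : HilbertBasis s 𝕜 V :=
  have hsV : s ⊆ V := hV ▸ Submodule.subset_span.trans (Submodule.le_topologicalClosure _)
  have : CompleteSpace V := (hV ▸ Submodule.isClosed_topologicalClosure _).completeSpace_coe
  HilbertBasis.mk (v := fun x => ⟨x, hsV x.2⟩) hs <| by
    rintro x -
    have hspan : V.subtype '' Submodule.span 𝕜 (Set.range fun x : s => (⟨x, hsV x.2⟩ : V))
        = Submodule.span 𝕜 s := by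
      rw [← Submodule.map_coe, Submodule.map_span, ← Set.range_comp]
      exact congr_arg (fun t : Set E => (Submodule.span 𝕜 t : Set E)) Subtype.range_coe
    rw [← SetLike.mem_coe, Submodule.topologicalClosure_coe,
      Topology.IsInducing.subtypeVal.closure_eq_preimage_closure_image]
    show (x : E) ∈ closure (V.subtype '' _)
    rw [hspan, ← Submodule.topologicalClosure_coe, hV]
    exact x.2

theorem HilbertBasis.nonempty_linearIsometryEquiv [CompleteSpace F] {ι : Type u₁} {κ : Type u₂}
    (b₁ : HilbertBasis ι 𝕜 E) (b₂ : HilbertBasis κ 𝕜 F) (h : lift.{u₂} #ι = lift.{u₁} #κ) :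
    Nonempty (E ≃ₗᵢ[𝕜] F) := by
  obtain ⟨e⟩ := lift_mk_eq'.mp h
  have hdense : ⊤ ≤ (Submodule.span 𝕜 (Set.range (b₂ ∘ e))).topologicalClosure := by
    rw [Set.range_comp, e.range_eq_univ, Set.image_univ, b₂.dense_span]
  exact ⟨b₁.repr.trans (HilbertBasis.mk (b₂.orthonormal.comp e e.injective) hdense).repr.symm⟩

variable {ι : Type*} [Fintype ι] [DecidableEq ι]

theorem DirectSum.IsInternal.isometryL2OfOrthogonalFamily_apply_coe
    {V : ι → Submodule 𝕜 E} (hV : DirectSum.IsInternal V)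
    (hV' : OrthogonalFamily 𝕜 (fun i => V i) fun i => (V i).subtypeₗᵢ) {i : ι} (x : V i) :
    hV.isometryL2OfOrthogonalFamily hV' x = PiLp.single 2 i x := by
  rw [← LinearIsometryEquiv.eq_symm_apply, isometryL2OfOrthogonalFamily_symm_apply,
    Finset.sum_eq_single i (fun j _ hj => by simp [Pi.single_eq_of_ne hj]) (by simp)]
  simp

theorem DirectSum.IsInternal.exists_linearIsometryEquiv_apply_coe
    {V : ι → Submodule 𝕜 E} {W : ι → Submodule 𝕜 F}
    (hV : DirectSum.IsInternal V) (hV' : OrthogonalFamily 𝕜 (fun i => V i) fun i => (V i).subtypeₗᵢ)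
    (hW : DirectSum.IsInternal W) (hW' : OrthogonalFamily 𝕜 (fun i => W i) fun i => (W i).subtypeₗᵢ)
    (u : ∀ i, V i ≃ₗᵢ[𝕜] W i) : ∃ U : E ≃ₗᵢ[𝕜] F, ∀ i (x : V i), U x = u i x := by
  refine ⟨(hV.isometryL2OfOrthogonalFamily hV').trans
    ((LinearIsometryEquiv.piLpCongrRight 2 u).trans (hW.isometryL2OfOrthogonalFamily hW').symm),
    fun i x => ?_⟩
  rw [LinearIsometryEquiv.trans_apply, LinearIsometryEquiv.trans_apply,
    LinearIsometryEquiv.symm_apply_eq, hV.isometryL2OfOrthogonalFamily_apply_coe,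
    hW.isometryL2OfOrthogonalFamily_apply_coe, LinearIsometryEquiv.piLpCongrRight_single]

end HilbertSpace

/-- Let `T₁`, `T₂` be bounded normal operators on complex Hilbert spaces
`H₁`, `H₂` with `σ(T₁) = σ(T₂) = K` for a finite set `K`, and suppose that for each
`μ ∈ K` the eigenspaces `ker (T₁ - μ)` and `ker (T₂ - μ)` admit total orthonormal families
of the same cardinality.  Then there is a unitary `U : H₁ → H₂` with `U T₁ = T₂ U`. -/
theorem exists_unitary_conjugating_of_finite_spectrum {H₁ : Type u₁} {H₂ : Type u₂}
    [NormedAddCommGroup H₁] [InnerProductSpace ℂ H₁] [CompleteSpace H₁]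
    [NormedAddCommGroup H₂] [InnerProductSpace ℂ H₂] [CompleteSpace H₂]
    (T₁ : H₁ →L[ℂ] H₁) (T₂ : H₂ →L[ℂ] H₂)
    (hT₁ : IsStarNormal T₁) (hT₂ : IsStarNormal T₂)
    (K : Set ℂ) (hK : K.Finite)
    (hσ₁ : spectrum ℂ T₁ = K) (hσ₂ : spectrum ℂ T₂ = K)
    (hdim : ∀ μ ∈ K, ∃ (s₁ : Set H₁) (s₂ : Set H₂),
      Orthonormal ℂ ((↑) : s₁ → H₁) ∧ Orthonormal ℂ ((↑) : s₂ → H₂) ∧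
      (Submodule.span ℂ s₁).topologicalClosure
        = LinearMap.ker (↑(T₁ - μ • (1 : H₁ →L[ℂ] H₁)) : H₁ →ₗ[ℂ] H₁) ∧
      (Submodule.span ℂ s₂).topologicalClosure
        = LinearMap.ker (↑(T₂ - μ • (1 : H₂ →L[ℂ] H₂)) : H₂ →ₗ[ℂ] H₂) ∧
      Cardinal.lift.{u₂} (Cardinal.mk s₁) = Cardinal.lift.{u₁} (Cardinal.mk s₂)) :
    ∃ U : H₁ ≃ₗᵢ[ℂ] H₂, ∀ x : H₁, U (T₁ x) = T₂ (U x) := by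
  classical
  have : Fintype K := hK.fintype
  have hE := hT₁.isInternal_eigenspaces (hσ₁ ▸ hK) hσ₁.le
  have hF := hT₂.isInternal_eigenspaces (hσ₂ ▸ hK) hσ₂.le
  have hu (μ : K) :
      Nonempty (eigenspace (T₁ : H₁ →ₗ[ℂ] H₁) μ ≃ₗᵢ[ℂ] eigenspace (T₂ : H₂ →ₗ[ℂ] H₂) μ) := by
    obtain ⟨s₁, s₂, hs₁, hs₂, hsp₁, hsp₂, hcard⟩ := hdim μ μ.2
    rw [ker_sub_smul_one] at hsp₁ hsp₂
    exact (Submodule.hilbertBasisOfOrthonormal hs₁ hsp₁).nonempty_linearIsometryEquiv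
      (Submodule.hilbertBasisOfOrthonormal hs₂ hsp₂) hcard
  let u μ := (hu μ).some
  obtain ⟨U, hU⟩ := hE.exists_linearIsometryEquiv_apply_coe
    (hT₁.orthogonalFamily_eigenspaces.comp Subtype.val_injective) hF
    (hT₂.orthogonalFamily_eigenspaces.comp Subtype.val_injective) u
  have hUT := LinearMap.comp_eq_comp_of_mapsTo_eigenspace (U := (U : H₁ →ₗ[ℂ] H₂))
    hE.submodule_iSup_eq_top fun μ x hx => (hU μ ⟨x, hx⟩ ▸ (u μ ⟨x, hx⟩).2 : U x ∈ _)
  exact ⟨U, LinearMap.congr_fun hUT⟩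
end
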